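/- Fix a ∈ ℝ, M > a, r ∈ ℝ, and let ξ(r) = erf(r/√2) + 1, σ(M,r) = (M − a)·e^{r²/2}·ξ(r) / (r·e^{r²/2}·ξ(r) + √(2/π)), μ = r·σ(M,r) + a. Then the variance of the left-truncated Gaussian distribution on [a, ∞) with parameters μ, σ(M,r) equals (M − a)²·(π·e^{r²}·ξ(r)² − √(2π)·r·e^{r²/2}·ξ(r) − 2) / (π·(r·e^{r²/2}·ξ(r) + √(2/π))²). -/

import Mathlib

/-!
Substituting `x = σ t + μ` turns the Gaussian truncated to `[a, ∞)` into `σ` times the standard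
one, `φ(t) = e^{-t²/2}`, truncated to `(α, ∞)`, `α = (a - μ) / σ`. Integrating by parts, the
latter has first and second moments `λ` and `1 + α λ`, where `λ = φ(α) / ∫_α^∞ φ` is the inverse
Mills ratio; hence the mean is `μ + σ λ` and the variance `σ² (1 + α λ - λ²)`. For `μ = r σ + a`
we get `α = -r`, and the tail integral equals `√(π/2) ξ(r)`, so `λ = √(2/π) / (e^{r²/2} ξ(r))`
and `σ(M,r) = (M - a) / (r + λ)`, which is positive because `λ > α`. Substituting these into
`σ² (1 - r λ - λ²)` gives Form II.
-/

open MeasureTheory Real Filter Set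

/-- The error function. -/
noncomputable def erf (x : ℝ) : ℝ :=
  (2 / Real.sqrt Real.pi) * ∫ t in (0:ℝ)..x, Real.exp (-t ^ 2)

/-- `ξ(r) = erf(r/√2) + 1`. -/
noncomputable def xi (r : ℝ) : ℝ := erf (r / Real.sqrt 2) + 1

/-- Normalizing constant of the left-truncated Gaussian on `[a, ∞)` with parameters `μ, σ`. -/
noncomputable def lZ (a μ σ : ℝ) : ℝ :=
  ∫ x in Set.Ici a, Real.exp (-(x - μ) ^ 2 / (2 * σ ^ 2))

/-- Mean of the left-truncated Gaussian on `[a, ∞)` with parameters `μ, σ`. -/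
noncomputable def lMean (a μ σ : ℝ) : ℝ :=
  (∫ x in Set.Ici a, x * Real.exp (-(x - μ) ^ 2 / (2 * σ ^ 2))) / lZ a μ σ

/-- Variance of the left-truncated Gaussian on `[a, ∞)` with parameters `μ, σ`. -/
noncomputable def lVar (a μ σ : ℝ) : ℝ :=
  (∫ x in Set.Ici a, (x - lMean a μ σ) ^ 2 * Real.exp (-(x - μ) ^ 2 / (2 * σ ^ 2))) / lZ a μ σ

/-- The spread parameter `σ(M,r)` for which the left-truncated Gaussian on `[a, ∞)`
with `μ = r·σ + a` has mean `M`. -/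
noncomputable def sigmaMr (a M r : ℝ) : ℝ :=
  (M - a) * Real.exp (r ^ 2 / 2) * xi r /
    (r * Real.exp (r ^ 2 / 2) * xi r + Real.sqrt (2 / Real.pi))

/-- Form II of the variance of a left-truncated Gaussian on `[a, ∞)` with mean `M` and
normalized location parameter `r`. -/
noncomputable def varII (a M r : ℝ) : ℝ :=
  (M - a) ^ 2 *
      (Real.pi * Real.exp (r ^ 2) * xi r ^ 2 -
        Real.sqrt (2 * Real.pi) * r * Real.exp (r ^ 2 / 2) * xi r - 2) /
    (Real.pi * (r * Real.exp (r ^ 2 / 2) * xi r + Real.sqrt (2 / Real.pi)) ^ 2)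

open Topology

noncomputable def gaussianTail (c : ℝ) : ℝ := ∫ t in Ioi c, rexp (-t ^ 2 / 2)

noncomputable def invMills (c : ℝ) : ℝ := rexp (-c ^ 2 / 2) / gaussianTail c

lemma integrable_pow_mul_exp_neg_sq_div_two (n : ℕ) :
    Integrable fun t : ℝ => t ^ n * rexp (-t ^ 2 / 2) := by
  have h := integrable_rpow_mul_exp_neg_mul_sq (b := 1 / 2) (by norm_num)
    (s := n) (by linarith [n.cast_nonneg (α := ℝ)])
  refine h.congr (ae_of_all _ fun t => ?_)
  simp only [rpow_natCast]
  congr 2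
  ring

lemma integrable_exp_neg_sq_div_two : Integrable fun t : ℝ => rexp (-t ^ 2 / 2) := by
  simpa using integrable_pow_mul_exp_neg_sq_div_two 0

lemma tendsto_pow_mul_exp_neg_sq_div_two (n : ℕ) :
    Tendsto (fun t : ℝ => t ^ n * rexp (-t ^ 2 / 2)) atTop (𝓝 0) := by
  have h := (rpow_mul_exp_neg_mul_sq_isLittleO_exp_neg (b := 1 / 2) (by norm_num) n).trans_tendsto
    (tendsto_exp_comp_nhds_zero.2 <| tendsto_id.const_mul_atTop_of_neg (by norm_num))
  refine h.congr fun t => ?_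
  simp only [rpow_natCast]
  congr 2
  ring

lemma gaussianTail_pos (c : ℝ) : 0 < gaussianTail c := by
  rw [gaussianTail, setIntegral_pos_iff_support_of_nonneg_ae
    (ae_of_all _ fun t => (exp_pos _).le) integrable_exp_neg_sq_div_two.integrableOn]
  simp [Function.support, (exp_pos _).ne']

lemma hasDerivAt_exp_neg_sq_div_two (t : ℝ) :
    HasDerivAt (fun t => rexp (-t ^ 2 / 2)) (-t * rexp (-t ^ 2 / 2)) t := by
  have h : HasDerivAt (fun t : ℝ => -t ^ 2 / 2) (-t) t := by
    refine (((hasDerivAt_pow 2 t).fun_neg).div_const 2).congr_deriv ?_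
    ring
  exact h.exp.congr_deriv (mul_comm _ _)

lemma integral_Ioi_mul_exp_neg_sq_div_two (c : ℝ) :
    ∫ t in Ioi c, t * rexp (-t ^ 2 / 2) = rexp (-c ^ 2 / 2) := by
  have h := integral_Ioi_of_hasDerivAt_of_tendsto' (a := c)
    (fun t _ => (hasDerivAt_exp_neg_sq_div_two t).fun_neg)
    (by simpa using (integrable_pow_mul_exp_neg_sq_div_two 1).integrableOn)
    (by simpa using (tendsto_pow_mul_exp_neg_sq_div_two 0).neg)
  simpa using h

lemma integral_Ioi_sq_mul_exp_neg_sq_div_two (c : ℝ) :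
    ∫ t in Ioi c, t ^ 2 * rexp (-t ^ 2 / 2) = c * rexp (-c ^ 2 / 2) + gaussianTail c := by
  have hderiv (t : ℝ) : HasDerivAt (fun t => -(t * rexp (-t ^ 2 / 2)))
      (t ^ 2 * rexp (-t ^ 2 / 2) - rexp (-t ^ 2 / 2)) t := by
    refine ((hasDerivAt_id' t).fun_mul (hasDerivAt_exp_neg_sq_div_two t)).fun_neg.congr_deriv ?_
    ring
  have h := integral_Ioi_of_hasDerivAt_of_tendsto' (a := c) (fun t _ => hderiv t)
    ((integrable_pow_mul_exp_neg_sq_div_two 2).sub integrable_exp_neg_sq_div_two).integrableOn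
    (by simpa using (tendsto_pow_mul_exp_neg_sq_div_two 1).neg)
  rw [integral_sub (integrable_pow_mul_exp_neg_sq_div_two 2).integrableOn
    integrable_exp_neg_sq_div_two.integrableOn] at h
  rw [gaussianTail]
  linarith

lemma gaussianTail_mul_invMills (c : ℝ) : gaussianTail c * invMills c = rexp (-c ^ 2 / 2) :=
  mul_div_cancel₀ _ (gaussianTail_pos c).ne'

lemma integrable_quadratic_mul_exp_neg_sq_div_two (p q s : ℝ) :
    Integrable fun t : ℝ => (p * t ^ 2 + q * t + s) * rexp (-t ^ 2 / 2) := by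
  have h1 := (integrable_pow_mul_exp_neg_sq_div_two 1).const_mul q
  simp only [pow_one] at h1
  simp_rw [add_mul, mul_assoc]
  exact (((integrable_pow_mul_exp_neg_sq_div_two 2).const_mul p).fun_add h1).fun_add
    (integrable_exp_neg_sq_div_two.const_mul s)

lemma integral_Ioi_quadratic_mul_exp_neg_sq_div_two (c p q s : ℝ) :
    ∫ t in Ioi c, (p * t ^ 2 + q * t + s) * rexp (-t ^ 2 / 2) =
      gaussianTail c * (p * (1 + c * invMills c) + q * invMills c + s) := by
  have h2 := (integrable_pow_mul_exp_neg_sq_div_two 2).const_mul p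
  have h1 := (integrable_pow_mul_exp_neg_sq_div_two 1).const_mul q
  have h0 := integrable_exp_neg_sq_div_two.const_mul s
  simp only [pow_one] at h1
  simp_rw [add_mul, mul_assoc]
  rw [integral_add (h2.fun_add h1).integrableOn h0.integrableOn,
    integral_add h2.integrableOn h1.integrableOn, integral_const_mul,
    integral_const_mul, integral_const_mul, integral_Ioi_sq_mul_exp_neg_sq_div_two,
    integral_Ioi_mul_exp_neg_sq_div_two, ← gaussianTail, ← gaussianTail_mul_invMills]
  ring

lemma lt_invMills (c : ℝ) : c < invMills c := by
  -- `invMills c` is the mean of the standard normal distribution conditioned on `(c, ∞)`.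
  have hf_pos : ∀ t ∈ Ioi c, 0 < (0 * t ^ 2 + 1 * t + -c) * rexp (-t ^ 2 / 2) := fun t ht =>
    mul_pos (by linarith [mem_Ioi.1 ht]) (exp_pos _)
  have hpos : 0 < ∫ t in Ioi c, (0 * t ^ 2 + 1 * t + -c) * rexp (-t ^ 2 / 2) := by
    rw [setIntegral_pos_iff_support_of_nonneg_ae,
      inter_eq_right.2 fun t ht => Function.mem_support.2 (hf_pos t ht).ne', volume_Ioi]
    · simp
    · filter_upwards [ae_restrict_mem measurableSet_Ioi] with t ht using (hf_pos t ht).le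
    · exact (integrable_quadratic_mul_exp_neg_sq_div_two 0 1 (-c)).integrableOn
  rw [integral_Ioi_quadratic_mul_exp_neg_sq_div_two] at hpos
  nlinarith [gaussianTail_pos c]

lemma setIntegral_Ici_mul_gaussian_eq (f : ℝ → ℝ) (a μ : ℝ) {σ : ℝ} (hσ : 0 < σ) :
    ∫ x in Ici a, f x * rexp (-(x - μ) ^ 2 / (2 * σ ^ 2)) =
      σ * ∫ t in Ioi ((a - μ) / σ), f (σ * t + μ) * rexp (-t ^ 2 / 2) := by
  have himage : (fun t => σ * t + μ) '' Ioi ((a - μ) / σ) = Ioi a := by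
    rw [← image_image (· + μ) (σ * ·), image_mul_left_Ioi hσ, image_add_const_Ioi,
      mul_div_cancel₀ _ hσ.ne', sub_add_cancel]
  have hderiv (t : ℝ) : HasDerivAt (fun t => σ * t + μ) σ t := by
    simpa using ((hasDerivAt_id t).const_mul σ).add_const μ
  rw [integral_Ici_eq_integral_Ioi, ← himage, integral_image_eq_integral_abs_deriv_smul
    measurableSet_Ioi (fun t _ => (hderiv t).hasDerivWithinAt)
    (fun s _ t _ hst => mul_left_cancel₀ hσ.ne' (add_right_cancel hst)), ← integral_const_mul]
  refine setIntegral_congr_fun measurableSet_Ioi fun t _ => ?_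
  rw [abs_of_pos hσ, smul_eq_mul, add_sub_cancel_right, mul_pow]
  field_simp

section TruncatedMoments

variable (a μ : ℝ) {σ : ℝ}

lemma lZ_eq (hσ : 0 < σ) : lZ a μ σ = σ * gaussianTail ((a - μ) / σ) := by
  simpa [lZ, gaussianTail] using setIntegral_Ici_mul_gaussian_eq (fun _ => 1) a μ hσ

lemma lMean_eq (hσ : 0 < σ) : lMean a μ σ = μ + σ * invMills ((a - μ) / σ) := by
  have hG := gaussianTail_pos ((a - μ) / σ)
  have hquad (t : ℝ) : σ * t + μ = 0 * t ^ 2 + σ * t + μ := by ring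
  rw [lMean, setIntegral_Ici_mul_gaussian_eq (fun x => x) a μ hσ, lZ_eq a μ hσ]
  simp_rw [hquad]
  rw [integral_Ioi_quadratic_mul_exp_neg_sq_div_two]
  field_simp
  ring

lemma lVar_eq (hσ : 0 < σ) :
    lVar a μ σ =
      σ ^ 2 * (1 + (a - μ) / σ * invMills ((a - μ) / σ) - invMills ((a - μ) / σ) ^ 2) := by
  have hG := gaussianTail_pos ((a - μ) / σ)
  have hquad (t l : ℝ) : (σ * t + μ - (μ + σ * l)) ^ 2 =
      σ ^ 2 * t ^ 2 + (-2 * σ ^ 2 * l) * t + σ ^ 2 * l ^ 2 := by ring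
  rw [lVar, setIntegral_Ici_mul_gaussian_eq (fun x => (x - lMean a μ σ) ^ 2) a μ hσ,
    lZ_eq a μ hσ, lMean_eq a μ hσ]
  simp_rw [hquad]
  rw [integral_Ioi_quadratic_mul_exp_neg_sq_div_two]
  field_simp
  ring

end TruncatedMoments

lemma integral_exp_neg_sq_div_two_eq_erf (r : ℝ) :
    ∫ t in (0 : ℝ)..r, rexp (-t ^ 2 / 2) = √(π / 2) * erf (r / √2) := by
  have hs2 : (√2 : ℝ) ≠ 0 := by positivity
  have hrescale (t : ℝ) : rexp (-t ^ 2 / 2) = rexp (-(t / √2) ^ 2) := by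
    rw [div_pow, sq_sqrt zero_le_two, neg_div]
  simp_rw [hrescale]
  rw [intervalIntegral.integral_comp_div (fun u => rexp (-u ^ 2)) hs2, zero_div, erf,
    sqrt_div pi_pos.le, smul_eq_mul]
  field_simp
  rw [sq_sqrt zero_le_two]
  ring

lemma integral_Ioi_zero_exp_neg_sq_div_two :
    ∫ t in Ioi (0 : ℝ), rexp (-t ^ 2 / 2) = √(π / 2) := by
  calc ∫ t in Ioi (0 : ℝ), rexp (-t ^ 2 / 2) = ∫ t in Ioi (0 : ℝ), rexp (-(1 / 2) * t ^ 2) := by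
        refine setIntegral_congr_fun measurableSet_Ioi fun t _ => ?_
        ring_nf
    _ = √(π / (1 / 2)) / 2 := integral_gaussian_Ioi _
    _ = √(π / 2) := by
        rw [show π / (1 / 2) = 2 ^ 2 * (π / 2) by ring, sqrt_mul (by positivity),
          sqrt_sq zero_le_two]
        ring

lemma gaussianTail_neg (r : ℝ) : gaussianTail (-r) = √(π / 2) * xi r := by
  have hint (c : ℝ) := integrable_exp_neg_sq_div_two.integrableOn (s := Ioi c)
  have hsymm : ∫ t in (-r)..0, rexp (-t ^ 2 / 2) = ∫ t in (0 : ℝ)..r, rexp (-t ^ 2 / 2) := by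
    have h := intervalIntegral.integral_comp_neg (a := 0) (b := r) (fun t => rexp (-t ^ 2 / 2))
    simp only [neg_sq, neg_zero] at h
    exact h.symm
  rw [gaussianTail, ← intervalIntegral.integral_interval_add_Ioi (hint (-r)) (hint 0), hsymm,
    integral_exp_neg_sq_div_two_eq_erf, integral_Ioi_zero_exp_neg_sq_div_two, xi]
  ring

lemma xi_pos (r : ℝ) : 0 < xi r :=
  (pos_iff_pos_of_mul_pos (gaussianTail_neg r ▸ gaussianTail_pos (-r))).1 (by positivity)

lemma invMills_neg (r : ℝ) : invMills (-r) = √(2 / π) / (rexp (r ^ 2 / 2) * xi r) := by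
  have := xi_pos r
  rw [invMills, gaussianTail_neg, neg_sq, neg_div, exp_neg, ← inv_div π, sqrt_inv]
  field_simp

lemma sigmaMr_eq (a M r : ℝ) : sigmaMr a M r = (M - a) / (r + invMills (-r)) := by
  have := xi_pos r
  rw [sigmaMr, invMills_neg]
  field_simp

lemma varII_eq (a M r : ℝ) :
    varII a M r = (M - a) ^ 2 * (1 - r * invMills (-r) - invMills (-r) ^ 2) /
      (r + invMills (-r)) ^ 2 := by
  have hξ := xi_pos r
  have hsq : √(2 / π) ^ 2 = 2 / π := sq_sqrt (by positivity)
  have hsqrt : √(2 * π) = π * √(2 / π) := by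
    rw [show 2 * π = π ^ 2 * (2 / π) by field_simp, sqrt_mul (sq_nonneg π), sqrt_sq pi_pos.le]
  have hexp : rexp (r ^ 2) = rexp (r ^ 2 / 2) ^ 2 := by rw [← exp_nat_mul]; ring_nf
  rw [invMills_neg, varII, hexp, hsqrt]
  field_simp
  rw [hsq]
  field_simp

/-- Form II of the variance: with `σ = σ(M,r)` and `μ = r·σ(M,r) + a`, the
variance of the left-truncated Gaussian on `[a, ∞)` equals the explicit formula `varII a M r`. -/
theorem lVar_eq_formII (a M r : ℝ) (hM : a < M) :
    lVar a (r * sigmaMr a M r + a) (sigmaMr a M r) = varII a M r := by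
  have hsum : 0 < r + invMills (-r) := by linarith [lt_invMills (-r)]
  have hσ : 0 < sigmaMr a M r := by
    rw [sigmaMr_eq]
    exact div_pos (sub_pos.2 hM) hsum
  have hα : (a - (r * sigmaMr a M r + a)) / sigmaMr a M r = -r := by
    field_simp
    ring
  rw [lVar_eq _ _ hσ, hα, varII_eq, sigmaMr_eq]
  field_simp
  ring
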